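/- arXiv:2603.28681 — 2 statements merged into one kernel-verified Lean document; each statement's English description precedes it below -/
import Mathlib

section
/- Let K ≥ 1, let λ ≥ 0, let Q : Fin K → ℝ, let p be a probability vector on Fin K with p_a > 0 for all a, and let φ : Fin K → ℝ with Σ_a p_a φ_a = 0. Define the centered entropy-adjusted advantage A_a := (Q_a − λ log p_a) − Σ_{a'} p_{a'} (Q_{a'} − λ log p_{a'}), and define g(ε) := Σ_a p_a (1 + ε φ_a) · ( Q_a − λ · log(p_a (1 + ε φ_a)) ). Then g is differentiable at ε = 0 with g'(0) = Σ_a p_a A_a φ_a. -/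
/-! The `a`-th summand is `x ↦ x (Q a - λ log x)` at `x = p a (1 + ε φ a)`, so its derivative
at `ε = 0` is `p a φ a (Q a - λ log p a - λ)`. Because the direction `p φ` has total mass `∑ a, p a φ a = 0`,
adding a constant to the first factor does not change the sum, so both the `-λ` from
differentiating the logarithm and the baseline `∑ a', p a' (Q a' - λ log p a')` drop out. -/

open Finset Real

lemma sum_mul_sub_const_of_sum_eq_zero {ι : Type*} [Fintype ι] (w f : ι → ℝ)
    (hw : ∑ i, w i = 0) (c : ℝ) : ∑ i, w i * (f i - c) = ∑ i, w i * f i := by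
  simp only [mul_sub, sum_sub_distrib, ← sum_mul, hw, zero_mul, sub_zero]

lemma hasDerivAt_entropyTerm_perturb {c : ℝ} (hc : c ≠ 0) (t q lam : ℝ) :
    HasDerivAt (fun e : ℝ => c * (1 + e * t) * (q - lam * log (c * (1 + e * t))))
      (c * t * (q - lam * log c - lam)) 0 := by
  have hu : HasDerivAt (fun e : ℝ => 1 + e * t) t 0 := by
    simpa using ((hasDerivAt_id (0 : ℝ)).mul_const t).const_add 1
  have hlog : HasDerivAt (fun e : ℝ => log (c * (1 + e * t))) t 0 := by
    refine ((hu.const_mul c).log (by simpa using hc)).congr_deriv ?_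
    rw [zero_mul, add_zero, mul_one, mul_div_cancel_left₀ _ hc]
  refine ((hu.const_mul c).fun_mul ((hlog.const_mul lam).const_sub q)).congr_deriv ?_
  simp only [zero_mul, add_zero, mul_one]
  ring

theorem stmt_5_general (K : ℕ) (lam : ℝ)
    (Q p : Fin K → ℝ) (hp0 : ∀ a, 0 < p a)
    (φ : Fin K → ℝ) (hφ : ∑ a, p a * φ a = 0)
    (A : Fin K → ℝ)
    (hA : ∀ a, A a = (Q a - lam * Real.log (p a)) -
      ∑ a', p a' * (Q a' - lam * Real.log (p a'))) :
    HasDerivAt (fun e : ℝ =>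
        ∑ a, p a * (1 + e * φ a) * (Q a - lam * Real.log (p a * (1 + e * φ a))))
      (∑ a, p a * A a * φ a) 0 := by
  set r : Fin K → ℝ := fun a => Q a - lam * log (p a)
  have hderiv := HasDerivAt.fun_sum (u := univ) fun a _ =>
    hasDerivAt_entropyTerm_perturb (hp0 a).ne' (φ a) (Q a) lam
  have hvalue : ∑ a, p a * A a * φ a = ∑ a, p a * φ a * (r a - lam) :=
    calc ∑ a, p a * A a * φ a = ∑ a, p a * φ a * (r a - ∑ a', p a' * r a') :=
          sum_congr rfl fun a _ => by rw [hA a]; ring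
      _ = ∑ a, p a * φ a * r a := sum_mul_sub_const_of_sum_eq_zero _ r hφ _
      _ = ∑ a, p a * φ a * (r a - lam) := (sum_mul_sub_const_of_sum_eq_zero _ r hφ _).symm
  exact hvalue ▸ hderiv

/-- For a strictly positive probability vector `p` on `Fin K`, rewards `Q`,
`λ ≥ 0`, and a `p`-centered score `φ`, the entropy-regularized value
`g(ε) = ∑ a, p a (1 + ε φ a) (Q a - λ log (p a (1 + ε φ a)))`
is differentiable at `ε = 0` with derivative `∑ a, p a A a φ a`, where
`A` is the centered entropy-adjusted advantage. -/
theorem stmt_5 (K : ℕ) (hK : 1 ≤ K) (lam : ℝ) (hlam : 0 ≤ lam)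
    (Q p : Fin K → ℝ) (hp0 : ∀ a, 0 < p a) (hp1 : ∑ a, p a = 1)
    (φ : Fin K → ℝ) (hφ : ∑ a, p a * φ a = 0)
    (A : Fin K → ℝ)
    (hA : ∀ a, A a = (Q a - lam * Real.log (p a)) -
      ∑ a', p a' * (Q a' - lam * Real.log (p a'))) :
    HasDerivAt (fun e : ℝ =>
        ∑ a, p a * (1 + e * φ a) * (Q a - lam * Real.log (p a * (1 + e * φ a))))
      (∑ a, p a * A a * φ a) 0 :=
  stmt_5_general K lam Q p hp0 φ hφ A hA
end

section
/- Let (X, 𝒜, μ) be a probability space, let K ≥ 1, let λ ≥ 0, let Q : X → Fin K → ℝ be measurable and bounded, let δ > 0, let π : X → Fin K → ℝ be measurable with π(x) a probability vector satisfying π(x)_a ≥ δ for all x and a, and let φ : X → Fin K → ℝ be measurable and bounded with Σ_a π(x)_a φ(x)_a = 0 for μ-almost every x. Define for ε near 0: J(ε) := ∫_X Σ_a π(x)_a (1 + ε φ(x)_a) · ( Q(x)_a − λ · log( π(x)_a (1 + ε φ(x)_a) ) ) dμ(x), and define the centered entropy-adjusted advantage A(x)_a := (Q(x)_a − λ log π(x)_a)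 − Σ_{a'} π(x)_{a'} (Q(x)_{a'} − λ log π(x)_{a'}). Then J is differentiable at ε = 0 with J'(0) = ∫_X Σ_a π(x)_a A(x)_a φ(x)_a dμ(x). -/
/-!
Differentiate under the integral sign. For `u = π(1 + εφ)` one has
`d/dε [u (q - λ log u)] = u' (q - λ log u - λ)` with `u' = πφ`. For `|ε| sup |φ| < 1/2` the
factor `π(1 + εφ)` stays in `[δ/2, 3/2]`, so the logarithm is uniformly bounded and the
derivative is dominated by a constant, which is integrable on a probability space. At `ε = 0`
the derivative is `∫ ∑ π (Q - λ log π - λ) φ`; since `∑ π φ = 0`, subtracting any constant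
from `Q - λ log π` — the `λ` coming from the entropy, or its `π`-mean — does not change it.
-/

open MeasureTheory Finset Filter Topology Set

theorem HasDerivAt.mul_sub_mul_log {u : ℝ → ℝ} {u' t : ℝ} (hu : HasDerivAt u u' t)
    (hu0 : u t ≠ 0) (q lam : ℝ) :
    HasDerivAt (fun s => u s * (q - lam * Real.log (u s)))
      (u' * (q - lam * Real.log (u t) - lam)) t := by
  refine (hu.fun_mul (((hu.log hu0).const_mul lam).const_sub q)).congr_deriv ?_
  field_simp
  ring

theorem abs_log_le_of_mem_Icc {a b u : ℝ} (ha : 0 < a) (hu : u ∈ Icc a b) :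
    |Real.log u| ≤ |Real.log a| + |Real.log b| := by
  have hau := Real.log_le_log ha hu.1
  have hub := Real.log_le_log (ha.trans_le hu.1) hu.2
  rw [abs_le]
  constructor <;> linarith [neg_abs_le (Real.log a), le_abs_self (Real.log b),
    abs_nonneg (Real.log a), abs_nonneg (Real.log b)]

theorem abs_sub_mul_log_le {q lam u C L : ℝ} (hq : |q| ≤ C) (hu : |Real.log u| ≤ L) :
    |q - lam * Real.log u| ≤ C + |lam| * L :=
  calc |q - lam * Real.log u| ≤ |q| + |lam| * |Real.log u| := by
        rw [← abs_mul]; exact abs_sub _ _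
    _ ≤ C + |lam| * L := by gcongr

theorem mul_one_add_mul_mem_Icc {δ p f t C : ℝ} (hδ : 0 ≤ δ) (hδp : δ ≤ p) (hp1 : p ≤ 1)
    (hf : |f| ≤ C) (ht : |t| * C < 1 / 2) : p * (1 + t * f) ∈ Icc (δ / 2) (3 / 2) := by
  have htf : |t * f| < 1 / 2 := by
    rw [abs_mul]
    exact (mul_le_mul_of_nonneg_left hf (abs_nonneg t)).trans_lt ht
  obtain ⟨hlo, hhi⟩ := abs_lt.mp htf
  constructor <;> nlinarith

section FiniteSum

variable {ι : Type*} [Fintype ι]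

theorem abs_sum_mul_le_of_abs_le {p g : ι → ℝ} {C : ℝ} (hp : ∀ a, 0 ≤ p a)
    (hp1 : ∑ a, p a = 1) (hg : ∀ a, |g a| ≤ C) : |∑ a, p a * g a| ≤ C :=
  calc |∑ a, p a * g a| ≤ ∑ a, p a * |g a| := by
        refine (abs_sum_le_sum_abs _ _).trans_eq (sum_congr rfl fun a _ => ?_)
        rw [abs_mul, abs_of_nonneg (hp a)]
    _ ≤ ∑ a, p a * C := sum_le_sum fun a _ => mul_le_mul_of_nonneg_left (hg a) (hp a)
    _ = C := by rw [← sum_mul, hp1, one_mul]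

theorem sum_mul_sub_mul_eq_of_sum_mul_eq_zero {p f g : ι → ℝ} (c : ℝ)
    (h : ∑ a, p a * f a = 0) : ∑ a, p a * (g a - c) * f a = ∑ a, p a * g a * f a := by
  have hc : ∑ a, p a * c * f a = c * ∑ a, p a * f a := by
    rw [mul_sum]; exact sum_congr rfl fun a _ => by ring
  simp only [mul_sub, sub_mul, sum_sub_distrib, hc, h, mul_zero, sub_zero]

end FiniteSum

section Perturbation

variable {X ι : Type*} [MeasurableSpace X] [Fintype ι] {μ : Measure X} [IsFiniteMeasure μ]
  {Q π φ : X → ι → ℝ} {lam δ CQ Cφ : ℝ}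

theorem hasDerivAt_integral_sum_mul_one_add_mul_entropy (hQ : Measurable Q)
    (hπ : Measurable π) (hφ : Measurable φ) (hQC : ∀ x a, |Q x a| ≤ CQ)
    (hφC : ∀ x a, |φ x a| ≤ Cφ) (hδ : 0 < δ) (hπδ : ∀ x a, δ ≤ π x a)
    (hπ1 : ∀ x, ∑ a, π x a = 1) :
    HasDerivAt (fun ε : ℝ => ∫ x, (∑ a, π x a * (1 + ε * φ x a) *
        (Q x a - lam * Real.log (π x a * (1 + ε * φ x a)))) ∂μ)
      (∫ x, (∑ a, π x a * (Q x a - lam * Real.log (π x a) - lam) * φ x a) ∂μ) 0 := by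
  have hπ0 : ∀ x a, 0 ≤ π x a := fun x a => hδ.le.trans (hπδ x a)
  have hπle : ∀ x a, π x a ≤ 1 := fun x a =>
    (single_le_sum (fun b _ => hπ0 x b) (mem_univ a)).trans_eq (hπ1 x)
  set s : Set ℝ := {t | |t| * Cφ < 1 / 2}
  have hs : s ∈ 𝓝 0 :=
    (continuous_abs.mul continuous_const).continuousAt.preimage_mem_nhds
      (Iio_mem_nhds (by simp))
  have hu : ∀ t ∈ s, ∀ x a, π x a * (1 + t * φ x a) ∈ Icc (δ / 2) (3 / 2) := fun t ht x a =>
    mul_one_add_mul_mem_Icc hδ.le (hπδ x a) (hπle x a) (hφC x a) ht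
  set L := |Real.log (δ / 2)| + |Real.log (3 / 2)|
  have hlog : ∀ t ∈ s, ∀ x a, |Real.log (π x a * (1 + t * φ x a))| ≤ L := fun t ht x a =>
    abs_log_le_of_mem_Icc (by positivity) (hu t ht x a)
  have h0 : (0 : ℝ) ∈ s := mem_of_mem_nhds hs
  have hF0 : Integrable (fun x => ∑ a, π x a * (1 + 0 * φ x a) *
      (Q x a - lam * Real.log (π x a * (1 + 0 * φ x a)))) μ := by
    refine .of_bound (by fun_prop) (CQ + |lam| * L) (Eventually.of_forall fun x => ?_)
    have hlog0 := hlog 0 h0 x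
    simp only [zero_mul, add_zero, mul_one, Real.norm_eq_abs] at hlog0 ⊢
    exact abs_sum_mul_le_of_abs_le (hπ0 x) (hπ1 x) fun a => abs_sub_mul_log_le (hQC x a) (hlog0 a)
  have hF'_le : ∀ᵐ x ∂μ, ∀ t ∈ s, ‖∑ a, π x a *
      (Q x a - lam * Real.log (π x a * (1 + t * φ x a)) - lam) * φ x a‖
        ≤ (CQ + |lam| * L + |lam|) * Cφ := by
    refine Eventually.of_forall fun x t ht => ?_
    simp only [Real.norm_eq_abs, mul_assoc]
    refine abs_sum_mul_le_of_abs_le (hπ0 x) (hπ1 x) fun a => ?_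
    rw [abs_mul]
    have hg := (abs_sub _ _).trans (add_le_add_left
      (abs_sub_mul_log_le (lam := lam) (hQC x a) (hlog t ht x a)) |lam|)
    exact mul_le_mul (by linarith) (hφC x a) (abs_nonneg _) ((abs_nonneg _).trans hg)
  have hderiv : ∀ᵐ x ∂μ, ∀ t ∈ s, HasDerivAt (fun t => ∑ a, π x a * (1 + t * φ x a) *
      (Q x a - lam * Real.log (π x a * (1 + t * φ x a))))
      (∑ a, π x a * (Q x a - lam * Real.log (π x a * (1 + t * φ x a)) - lam) * φ x a) t := by
    refine Eventually.of_forall fun x t ht => HasDerivAt.fun_sum fun a _ => ?_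
    have hlin : HasDerivAt (fun t => π x a * (1 + t * φ x a)) (π x a * φ x a) t := by
      simpa using (((hasDerivAt_id t).mul_const (φ x a)).const_add 1).const_mul (π x a)
    have hne : π x a * (1 + t * φ x a) ≠ 0 := by linarith [(hu t ht x a).1]
    exact (hlin.mul_sub_mul_log hne (Q x a) lam).congr_deriv (by ring)
  have key := hasDerivAt_integral_of_dominated_loc_of_deriv_le hs
    (Eventually.of_forall fun t => by fun_prop) hF0 (by fun_prop) hF'_le
    (integrable_const _) hderiv
  simpa only [zero_mul, add_zero, mul_one] using key.2

end Perturbation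

theorem stmt_13_general {X : Type*} [MeasurableSpace X] (μ : Measure X) [IsProbabilityMeasure μ]
    (K : ℕ) (lam : ℝ)
    (Q : X → Fin K → ℝ) (hQmeas : Measurable Q) (hQbdd : ∃ C, ∀ x a, |Q x a| ≤ C)
    (δ : ℝ) (hδ : 0 < δ)
    (π : X → Fin K → ℝ) (hπmeas : Measurable π)
    (hπδ : ∀ x a, δ ≤ π x a) (hπ1 : ∀ x, ∑ a, π x a = 1)
    (φ : X → Fin K → ℝ) (hφmeas : Measurable φ) (hφbdd : ∃ C, ∀ x a, |φ x a| ≤ C)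
    (hφ0 : ∀ᵐ x ∂μ, ∑ a, π x a * φ x a = 0)
    (A : X → Fin K → ℝ)
    (hA : ∀ x a, A x a = (Q x a - lam * Real.log (π x a)) -
      ∑ a', π x a' * (Q x a' - lam * Real.log (π x a'))) :
    HasDerivAt (fun ε : ℝ => ∫ x, (∑ a, π x a * (1 + ε * φ x a) *
        (Q x a - lam * Real.log (π x a * (1 + ε * φ x a)))) ∂μ)
      (∫ x, (∑ a, π x a * A x a * φ x a) ∂μ) 0 := by
  obtain ⟨CQ, hQC⟩ := hQbdd
  obtain ⟨Cφ, hφC⟩ := hφbdd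
  convert hasDerivAt_integral_sum_mul_one_add_mul_entropy (μ := μ) (lam := lam)
    hQmeas hπmeas hφmeas hQC hφC hδ hπδ hπ1 using 1
  refine integral_congr_ae ?_
  filter_upwards [hφ0] with x hx
  simp only [hA]
  rw [sum_mul_sub_mul_eq_of_sum_mul_eq_zero _ hx, sum_mul_sub_mul_eq_of_sum_mul_eq_zero _ hx]

/-- On a probability space `(X, μ)`, for a bounded measurable reward
`Q : X → Fin K → ℝ`, a measurable policy `π` bounded below by `δ > 0`, and a bounded
measurable score direction `φ` that is `π(x)`-centered for a.e. `x`, the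
entropy-regularized value
`J(ε) = ∫ ∑ a, π(x)_a (1 + ε φ(x)_a) (Q(x)_a - λ log (π(x)_a (1 + ε φ(x)_a))) dμ`
is differentiable at `ε = 0` with derivative `∫ ∑ a, π(x)_a A(x)_a φ(x)_a dμ`, where `A`
is the centered entropy-adjusted advantage. -/
theorem stmt_13 {X : Type*} [MeasurableSpace X] (μ : Measure X) [IsProbabilityMeasure μ]
    (K : ℕ) (hK : 1 ≤ K) (lam : ℝ) (hlam : 0 ≤ lam)
    (Q : X → Fin K → ℝ) (hQmeas : Measurable Q) (hQbdd : ∃ C, ∀ x a, |Q x a| ≤ C)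
    (δ : ℝ) (hδ : 0 < δ)
    (π : X → Fin K → ℝ) (hπmeas : Measurable π)
    (hπδ : ∀ x a, δ ≤ π x a) (hπ1 : ∀ x, ∑ a, π x a = 1)
    (φ : X → Fin K → ℝ) (hφmeas : Measurable φ) (hφbdd : ∃ C, ∀ x a, |φ x a| ≤ C)
    (hφ0 : ∀ᵐ x ∂μ, ∑ a, π x a * φ x a = 0)
    (A : X → Fin K → ℝ)
    (hA : ∀ x a, A x a = (Q x a - lam * Real.log (π x a)) -
      ∑ a', π x a' * (Q x a' - lam * Real.log (π x a'))) :
    HasDerivAt (fun ε : ℝ => ∫ x, (∑ a, π x a * (1 + ε * φ x a) *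
        (Q x a - lam * Real.log (π x a * (1 + ε * φ x a)))) ∂μ)
      (∫ x, (∑ a, π x a * A x a * φ x a) ∂μ) 0 :=
  stmt_13_general μ K lam Q hQmeas hQbdd δ hδ π hπmeas hπδ hπ1 φ hφmeas hφbdd hφ0 A hA
end
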